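/- The conic y^2 = -x^2 + 40x - 404 has no points over ℝ and no points over the field ℚ₂ of 2-adic numbers; that is, there are no x, y ∈ ℝ with y^2 = -x^2 + 40x - 404, and there are no x, y ∈ ℚ₂ with y^2 = -x^2 + 40x - 404. -/
import Mathlib

private lemma two_dvd_or' (a : ℤ_[2]) : (∃ s, a = 2*s) ∨ (∃ s, a = 1 + 2*s) := by
  have h2 : ∀ z : ℤ_[2], PadicInt.toZMod z = 0 → (2:ℤ_[2]) ∣ z := by
    intro z hz
    have : z ∈ RingHom.ker (PadicInt.toZMod : ℤ_[2] →+* ZMod 2) := hz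
    rw [PadicInt.ker_toZMod, PadicInt.maximalIdeal_eq_span_p, Ideal.mem_span_singleton] at this
    exact_mod_cast this
  rcases (by decide : ∀ t : ZMod 2, t = 0 ∨ t = 1) (PadicInt.toZMod a) with h | h
  · obtain ⟨s, hs⟩ := h2 a h
    exact Or.inl ⟨s, hs⟩
  · obtain ⟨s, hs⟩ := h2 (a - 1) (by simp [map_sub, h])
    exact Or.inr ⟨s, by linear_combination hs⟩

private lemma not_two_dvd_one' : ¬ ∃ c : ℤ_[2], (1:ℤ_[2]) = 2 * c := by
  rintro ⟨c, hc⟩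
  have : (2:ℤ_[2]) ∣ 1 := ⟨c, hc⟩
  have := (PadicInt.norm_lt_one_iff_dvd (1:ℤ_[2])).2 (by exact_mod_cast this)
  simp at this

private lemma key (n : ℕ) : ∀ a b : ℤ_[2], a^2 + b^2 ≠ -(4^n) := by
  induction n with
  | zero =>
    intro a b h
    rcases two_dvd_or' a with ⟨s, rfl⟩ | ⟨s, rfl⟩ <;>
      rcases two_dvd_or' b with ⟨t, rfl⟩ | ⟨t, rfl⟩ <;> apply not_two_dvd_one'
    · exact ⟨-(2*s^2 + 2*t^2), by linear_combination h⟩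
    · have h2 : (2:ℤ_[2]) * (2*s^2 + 2*t + 2*t^2 + 1) = 0 := by linear_combination h
      have h3 : (2*s^2 + 2*t + 2*t^2 + 1 : ℤ_[2]) = 0 :=
        (mul_eq_zero.mp h2).resolve_left two_ne_zero
      exact ⟨-(s^2 + t + t^2), by linear_combination h3⟩
    · have h2 : (2:ℤ_[2]) * (2*t^2 + 2*s + 2*s^2 + 1) = 0 := by linear_combination h
      have h3 : (2*t^2 + 2*s + 2*s^2 + 1 : ℤ_[2]) = 0 :=
        (mul_eq_zero.mp h2).resolve_left two_ne_zero
      exact ⟨-(t^2 + s + s^2), by linear_combination h3⟩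
    · exact ⟨2*(s + s^2 + t + t^2) + 2, by linear_combination -h⟩
  | succ n ih =>
    intro a b h
    rcases two_dvd_or' a with ⟨s, rfl⟩ | ⟨s, rfl⟩ <;>
      rcases two_dvd_or' b with ⟨t, rfl⟩ | ⟨t, rfl⟩
    · have h4 : (4:ℤ_[2]) * (s^2 + t^2) = 4 * (-(4^n)) := by linear_combination h
      exact ih s t (mul_left_cancel₀ (by norm_num) h4)
    · apply not_two_dvd_one'
      exact ⟨-(2*s^2 + 2*t + 2*t^2 + 2*4^n), by linear_combination h⟩
    · apply not_two_dvd_one'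
      exact ⟨-(2*t^2 + 2*s + 2*s^2 + 2*4^n), by linear_combination h⟩
    · apply not_two_dvd_one'
      have h2 : (2:ℤ_[2]) * (2*(s + s^2 + t + t^2) + 1 + 2*4^n) = 0 := by
        linear_combination h
      have h3 : (2*(s + s^2 + t + t^2) + 1 + 2*4^n : ℤ_[2]) = 0 :=
        (mul_eq_zero.mp h2).resolve_left two_ne_zero
      exact ⟨-((s + s^2 + t + t^2) + 4^n), by linear_combination h3⟩

private lemma no_sum_sq_neg_one (u v : ℚ_[2]) : u^2 + v^2 ≠ -1 := by
  intro h
  obtain ⟨m, hm⟩ := pow_unbounded_of_one_lt ‖u‖ (by norm_num : (1:ℝ) < 2)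
  obtain ⟨k, hk⟩ := pow_unbounded_of_one_lt ‖v‖ (by norm_num : (1:ℝ) < 2)
  set n := max m k with hn
  have hp : ‖(2:ℚ_[2])‖ = (2:ℝ)⁻¹ := by
    have := @Padic.norm_p 2 _
    simpa using this
  have hnu : ‖(2:ℚ_[2])^n * u‖ ≤ 1 := by
    rw [norm_mul, norm_pow, hp]
    calc (2:ℝ)⁻¹^n * ‖u‖ ≤ (2:ℝ)⁻¹^n * 2^n := by
          apply mul_le_mul_of_nonneg_left _ (by positivity)
          exact le_trans (le_of_lt hm) (pow_le_pow_right₀ (by norm_num) (le_max_left m k))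
      _ = 1 := by rw [← mul_pow]; norm_num
  have hnv : ‖(2:ℚ_[2])^n * v‖ ≤ 1 := by
    rw [norm_mul, norm_pow, hp]
    calc (2:ℝ)⁻¹^n * ‖v‖ ≤ (2:ℝ)⁻¹^n * 2^n := by
          apply mul_le_mul_of_nonneg_left _ (by positivity)
          exact le_trans (le_of_lt hk) (pow_le_pow_right₀ (by norm_num) (le_max_right m k))
      _ = 1 := by rw [← mul_pow]; norm_num
  set a : ℤ_[2] := ⟨(2:ℚ_[2])^n * u, hnu⟩
  set b : ℤ_[2] := ⟨(2:ℚ_[2])^n * v, hnv⟩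
  apply key n a b
  apply Subtype.coe_injective
  push_cast
  show ((2:ℚ_[2])^n * u)^2 + ((2:ℚ_[2])^n * v)^2 = -(4^n)
  have h4 : ((4:ℚ_[2])^n) = ((2:ℚ_[2])^n)^2 := by rw [← pow_mul, show (4:ℚ_[2]) = 2^2 by norm_num, ← pow_mul, Nat.mul_comm]
  rw [mul_pow, mul_pow, ← mul_add, h, h4]
  ring

/-- The conic `y² = -x² + 40x - 404` has no real points and no `2`-adic
points. -/
theorem conic_no_real_or_2adic_points :
    (¬ ∃ x y : ℝ, y ^ 2 = -x ^ 2 + 40 * x - 404) ∧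
    (¬ ∃ x y : ℚ_[2], y ^ 2 = -x ^ 2 + 40 * x - 404) := by
  constructor
  · rintro ⟨x, y, h⟩
    nlinarith [sq_nonneg y, sq_nonneg (x - 20)]
  · rintro ⟨x, y, h⟩
    apply no_sum_sq_neg_one (y/2) ((x-20)/2)
    field_simp
    linear_combination h
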